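/- In the complexified QUE algebra 𝔘_q(𝔤) of a semisimple Lie algebra of rank ℓ (with relations K_iE_jK_i^{-1} = q_i^{a_{ij}/2}E_j, K_iF_jK_i^{-1} = q_i^{-a_{ij}/2}F_j, [E_i,F_j] = δ_{ij}(K_i²−K_i^{-2})/(q_i−q_i^{-1})), the pair (K²_{2ρ}, ε), where K²_{2ρ} = K_1²···K_ℓ², is a modular pair in involution: ε(K²_{2ρ}) = 1 and S_ε² = S² = Ad_{K²_{2ρ}}. -/

import Mathlib

/- STATEMENT 13: In the complexified QUE algebra 𝔘_q(𝔤) the pair (K²_{2ρ}, ε) is a modular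
pair in involution: ε(K²_{2ρ}) = 1 and S_ε² = S² = Ad_{K²_{2ρ}}.  Following the given context,
this is verified on generators, and the statement for 𝔘_q(sl_2) with σ = K² suffices: in
𝔘_q(sl_2) (relations KK⁻¹ = K⁻¹K = 1, KEK⁻¹ = qE, KFK⁻¹ = q⁻¹F,
[E,F] = (K²−K⁻²)/(q−q⁻¹); antipode S(K) = K⁻¹, S(E) = −qE, S(F) = −q⁻¹F; counit ε(K) =
ε(K⁻¹) = 1, ε(E) = ε(F) = 0), one has ε(K²) = 1 and S²(x) = K² x K⁻² for every generator x. -/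

variable (k : Type) [Field k]

/-- Defining relations of `𝔘_q(sl_2)` on the free algebra on `0 ↦ E`, `1 ↦ F`,
`2 ↦ K`, `3 ↦ K⁻¹`. -/
inductive uqsl2Rel (q : k) : FreeAlgebra k (Fin 4) → FreeAlgebra k (Fin 4) → Prop
  | KKi : uqsl2Rel q (FreeAlgebra.ι k 2 * FreeAlgebra.ι k 3) 1
  | KiK : uqsl2Rel q (FreeAlgebra.ι k 3 * FreeAlgebra.ι k 2) 1
  | KE : uqsl2Rel q (FreeAlgebra.ι k 2 * FreeAlgebra.ι k 0 * FreeAlgebra.ι k 3)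
      (q • FreeAlgebra.ι k 0)
  | KF : uqsl2Rel q (FreeAlgebra.ι k 2 * FreeAlgebra.ι k 1 * FreeAlgebra.ι k 3)
      (q⁻¹ • FreeAlgebra.ι k 1)
  | EF : uqsl2Rel q (FreeAlgebra.ι k 0 * FreeAlgebra.ι k 1 - FreeAlgebra.ι k 1 * FreeAlgebra.ι k 0)
      ((q - q⁻¹)⁻¹ • (FreeAlgebra.ι k 2 * FreeAlgebra.ι k 2 -
        FreeAlgebra.ι k 3 * FreeAlgebra.ι k 3))

/-- The complexified quantum enveloping algebra `𝔘_q(sl_2)`. -/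
abbrev Uqsl2 (q : k) : Type := RingQuot (uqsl2Rel k q)

noncomputable def uqE (q : k) : Uqsl2 k q := RingQuot.mkAlgHom k _ (FreeAlgebra.ι k 0)
noncomputable def uqF (q : k) : Uqsl2 k q := RingQuot.mkAlgHom k _ (FreeAlgebra.ι k 1)
noncomputable def uqK (q : k) : Uqsl2 k q := RingQuot.mkAlgHom k _ (FreeAlgebra.ι k 2)
noncomputable def uqKi (q : k) : Uqsl2 k q := RingQuot.mkAlgHom k _ (FreeAlgebra.ι k 3)

theorem conj_mul_self_eq_smul {R A : Type*} [CommSemiring R] [Semiring A] [Algebra R A]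
    {u v x : A} {c : R} (h : u * x * v = c • x) :
    u * u * x * (v * v) = (c * c) • x := by
  calc u * u * x * (v * v) = u * (u * x * v) * v := by simp only [mul_assoc]
    _ = (c * c) • x := by rw [h, mul_smul_comm, smul_mul_assoc, h, smul_smul]

theorem conj_mul_self_eq_of_commute {M : Type*} [Monoid M] {u v x : M} (huv : u * v = 1)
    (hx : Commute u x) : u * u * x * (v * v) = x := by
  have hux : u * u * x = x * u * u := by rw [mul_assoc, hx.eq, ← mul_assoc, hx.eq]
  calc u * u * x * (v * v) = x * (u * (u * v) * v) := by rw [hux]; simp only [mul_assoc]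
    _ = x := by rw [huv, mul_one, huv, mul_one]

theorem LinearMap.apply_apply_of_apply_eq_neg_smul {R M : Type*} [CommRing R] [AddCommGroup M]
    [Module R M] (f : M →ₗ[R] M) {x : M} {c : R} (h : f x = -(c • x)) :
    f (f x) = (c * c) • x := by
  rw [h, map_neg, map_smul, h, smul_neg, neg_neg, smul_smul]

section Relations

variable {k} (q : k)

theorem uqK_mul_uqKi : uqK k q * uqKi k q = 1 := by
  simpa only [uqK, uqKi, map_mul, map_one] using RingQuot.mkAlgHom_rel k (uqsl2Rel.KKi (q := q))

theorem uqKi_mul_uqK : uqKi k q * uqK k q = 1 := by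
  simpa only [uqK, uqKi, map_mul, map_one] using RingQuot.mkAlgHom_rel k (uqsl2Rel.KiK (q := q))

theorem uqK_mul_uqE_mul_uqKi : uqK k q * uqE k q * uqKi k q = q • uqE k q := by
  simpa only [uqK, uqKi, uqE, map_mul, map_smul] using
    RingQuot.mkAlgHom_rel k (uqsl2Rel.KE (q := q))

theorem uqK_mul_uqF_mul_uqKi : uqK k q * uqF k q * uqKi k q = q⁻¹ • uqF k q := by
  simpa only [uqK, uqKi, uqF, map_mul, map_smul] using
    RingQuot.mkAlgHom_rel k (uqsl2Rel.KF (q := q))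

theorem commute_uqK_uqKi : Commute (uqK k q) (uqKi k q) :=
  (uqK_mul_uqKi q).trans (uqKi_mul_uqK q).symm

end Relations

theorem uqsl2_modular_pair_in_involution (q : k)
    (S : Uqsl2 k q →ₗ[k] Uqsl2 k q) (ε : Uqsl2 k q →ₗ[k] k)
    (hSK : S (uqK k q) = uqKi k q) (hSKi : S (uqKi k q) = uqK k q)
    (hSE : S (uqE k q) = -(q • uqE k q)) (hSF : S (uqF k q) = -(q⁻¹ • uqF k q))
    (hεmul : ∀ a b, ε (a * b) = ε a * ε b)
    (hεK : ε (uqK k q) = 1) :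
    ε (uqK k q * uqK k q) = 1 ∧
    (∀ x ∈ ({uqE k q, uqF k q, uqK k q, uqKi k q} : Set (Uqsl2 k q)),
      S (S x) = (uqK k q * uqK k q) * x * (uqKi k q * uqKi k q)) := by
  refine ⟨by rw [hεmul, hεK, one_mul], ?_⟩
  rintro x (rfl | rfl | rfl | rfl)
  · rw [S.apply_apply_of_apply_eq_neg_smul hSE, conj_mul_self_eq_smul (uqK_mul_uqE_mul_uqKi q)]
  · rw [S.apply_apply_of_apply_eq_neg_smul hSF, conj_mul_self_eq_smul (uqK_mul_uqF_mul_uqKi q)]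
  · rw [hSK, hSKi, conj_mul_self_eq_of_commute (uqK_mul_uqKi q) (Commute.refl _)]
  · rw [hSKi, hSK, conj_mul_self_eq_of_commute (uqK_mul_uqKi q) (commute_uqK_uqKi q)]
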